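/- Let P ∈ ℝ^{d×d} and R ∈ ℝ^{S×S} be symmetric positive definite, H ∈ ℝ^{S×d}, λ ≥ 0, and define A = -(1/2)·P·Hᵀ·(λ·H·P·Hᵀ + R)⁻¹·H. If 0 < ε < 2·r(λ)/(p̄·‖H‖_F²), where p̄ is the largest eigenvalue of P and r(λ) the smallest eigenvalue of λ·H·P·Hᵀ + R, then for any b ∈ ℝ^d the map f(x) = x + ε·(A·x + b) is a bijection of ℝ^d. -/

import Mathlib

/-!
If `(1 - c • P Hᵀ M⁻¹ H) z = 0`, put `w = M⁻¹ H z` and `u = Hᵀ w`, so that `z = c P u`. The number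
`q = z ⬝ u = w ⬝ M w` is then at least `r ‖w‖²`, and also equals `c (u ⬝ P u) ≤ c p̄ ‖u‖² ≤
c p̄ ‖H‖_F² ‖w‖²`. As `c p̄ ‖H‖_F² < r` this forces `w = 0`, hence `z = 0`. So the linear part
`1 + ε A` of the affine map (with `c = ε / 2`) is injective, hence bijective.
-/

open Matrix

noncomputable def frobNorm {m n : ℕ} (M : Matrix (Fin m) (Fin n) ℝ) : ℝ :=
  Real.sqrt (∑ i : Fin m, ∑ j : Fin n, (M i j) ^ 2)

section Rayleigh

open scoped MatrixOrder

variable {n : Type*} [Fintype n] [DecidableEq n] {A : Matrix n n ℝ}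

theorem Matrix.IsHermitian.mul_dotProduct_self_le_dotProduct_mulVec (hA : A.IsHermitian) {c : ℝ}
    (h : ∀ i, c ≤ hA.eigenvalues i) (x : n → ℝ) : c * (x ⬝ᵥ x) ≤ x ⬝ᵥ A *ᵥ x := by
  have hle : algebraMap ℝ _ c ≤ A := by
    rw [algebraMap_le_iff_le_spectrum hA.isSelfAdjoint, hA.spectrum_real_eq_range_eigenvalues]
    rintro _ ⟨i, rfl⟩
    exact h i
  simpa [Algebra.algebraMap_eq_smul_one, sub_mulVec, dotProduct_sub, smul_mulVec] using
    (Matrix.le_iff.mp hle).dotProduct_mulVec_nonneg x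

theorem Matrix.IsHermitian.dotProduct_mulVec_le_mul_dotProduct_self (hA : A.IsHermitian) {c : ℝ}
    (h : ∀ i, hA.eigenvalues i ≤ c) (x : n → ℝ) : x ⬝ᵥ A *ᵥ x ≤ c * (x ⬝ᵥ x) := by
  have hle : A ≤ algebraMap ℝ _ c := by
    rw [le_algebraMap_iff_spectrum_le hA.isSelfAdjoint, hA.spectrum_real_eq_range_eigenvalues]
    rintro _ ⟨i, rfl⟩
    exact h i
  simpa [Algebra.algebraMap_eq_smul_one, sub_mulVec, dotProduct_sub, smul_mulVec] using
    (Matrix.le_iff.mp hle).dotProduct_mulVec_nonneg x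

end Rayleigh

theorem frobNorm_transpose {m n : ℕ} (M : Matrix (Fin m) (Fin n) ℝ) : frobNorm Mᵀ = frobNorm M := by
  rw [frobNorm, frobNorm, Finset.sum_comm]
  rfl

theorem dotProduct_self_mulVec_le_frobNorm_sq {m n : ℕ} (M : Matrix (Fin m) (Fin n) ℝ)
    (x : Fin n → ℝ) : (M *ᵥ x) ⬝ᵥ (M *ᵥ x) ≤ frobNorm M ^ 2 * (x ⬝ᵥ x) := by
  have hrow (i : Fin m) : (M *ᵥ x) i * (M *ᵥ x) i ≤ (∑ j, M i j ^ 2) * (x ⬝ᵥ x) := by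
    simpa [mulVec, dotProduct, pow_two] using Finset.sum_mul_sq_le_sq_mul_sq Finset.univ (M i) x
  rw [frobNorm, Real.sq_sqrt (by positivity), Finset.sum_mul]
  exact Finset.sum_le_sum fun i _ => hrow i

theorem injective_mulVec_one_sub_smul_mul_inv_mul {d S : ℕ} {P : Matrix (Fin d) (Fin d) ℝ}
    {M : Matrix (Fin S) (Fin S) ℝ} (H : Matrix (Fin S) (Fin d) ℝ) (hP : P.IsHermitian)
    (hM : M.IsHermitian) {pbar r c : ℝ} (hpbar : ∀ i, hP.eigenvalues i ≤ pbar)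
    (hr : ∀ i, r ≤ hM.eigenvalues i) (hc : 0 ≤ c) (hpbar0 : 0 ≤ pbar)
    (hcr : c * pbar * frobNorm H ^ 2 < r) :
    Function.Injective (1 - c • (P * Hᵀ * M⁻¹ * H)).mulVec := by
  have hr0 : 0 < r := lt_of_le_of_lt (by positivity) hcr
  have hMdet : M.det ≠ 0 :=
    (hM.posDef_iff_eigenvalues_pos.mpr fun i => hr0.trans_le (hr i)).det_pos.ne'
  have hMinv : M * M⁻¹ = 1 := mul_nonsing_inv M (isUnit_iff_ne_zero.mpr hMdet)
  refine (injective_iff_map_eq_zero (mulVecLin (1 - c • (P * Hᵀ * M⁻¹ * H)))).mpr fun z hz => ?_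
  set w := M⁻¹ *ᵥ H *ᵥ z with hw
  set u := Hᵀ *ᵥ w with hu
  have hz_eq : z = c • P *ᵥ u := by
    have hXz : (P * Hᵀ * M⁻¹ * H) *ᵥ z = P *ᵥ u := by
      rw [hu, hw, mulVec_mulVec, mulVec_mulVec, mulVec_mulVec]
    rw [mulVecLin_apply, sub_mulVec, one_mulVec, smul_mulVec, hXz] at hz
    exact sub_eq_zero.mp hz
  have hq_lower : r * (w ⬝ᵥ w) ≤ z ⬝ᵥ u := by
    have hMw : M *ᵥ w = H *ᵥ z := by rw [hw, mulVec_mulVec, hMinv, one_mulVec]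
    calc r * (w ⬝ᵥ w) ≤ w ⬝ᵥ M *ᵥ w := hM.mul_dotProduct_self_le_dotProduct_mulVec hr w
      _ = z ⬝ᵥ u := by
        rw [hMw, dotProduct_comm, hu, dotProduct_mulVec z, vecMul_transpose]
  have hq_upper : z ⬝ᵥ u ≤ c * pbar * frobNorm H ^ 2 * (w ⬝ᵥ w) := by
    calc z ⬝ᵥ u = c * (u ⬝ᵥ P *ᵥ u) := by
          rw [hz_eq, smul_dotProduct, dotProduct_comm, smul_eq_mul]
      _ ≤ c * (pbar * (u ⬝ᵥ u)) :=
          mul_le_mul_of_nonneg_left (hP.dotProduct_mulVec_le_mul_dotProduct_self hpbar u) hc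
      _ ≤ c * (pbar * (frobNorm H ^ 2 * (w ⬝ᵥ w))) := by
          have := dotProduct_self_mulVec_le_frobNorm_sq Hᵀ w
          rw [frobNorm_transpose] at this
          gcongr
      _ = c * pbar * frobNorm H ^ 2 * (w ⬝ᵥ w) := by ring
  have hw0 : w = 0 := by
    have : w ⬝ᵥ w ≤ 0 := by nlinarith [hq_lower.trans hq_upper]
    have hww : 0 ≤ w ⬝ᵥ w := by simpa using dotProduct_star_self_nonneg w
    exact dotProduct_self_eq_zero.mp (le_antisymm this hww)
  simpa [hu, hw0] using hz_eq

theorem affine_flow_step_bijective_general {d S : ℕ}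
    (P : Matrix (Fin d) (Fin d) ℝ) (R : Matrix (Fin S) (Fin S) ℝ)
    (H : Matrix (Fin S) (Fin d) ℝ) (lam pbar r ε : ℝ) (b : Fin d → ℝ)
    (hP : P.PosDef)
    (hpbar : pbar = ⨆ i : Fin d, hP.1.eigenvalues i)
    (hsum : (lam • (H * P * Hᵀ) + R).IsHermitian)
    (hr : r = ⨅ i : Fin S, hsum.eigenvalues i)
    (hε0 : 0 < ε) (hε1 : ε < 2 * r / (pbar * frobNorm H ^ 2)) :
    Function.Bijective (fun x : Fin d → ℝ =>
      x + ε • ((((-(1 / 2) : ℝ) •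
        (P * Hᵀ * (lam • (H * P * Hᵀ) + R)⁻¹ * H)).mulVec x) + b)) := by
  have hP_le : ∀ i, hP.1.eigenvalues i ≤ pbar :=
    hpbar ▸ fun i => le_ciSup (Set.finite_range _).bddAbove i
  have hpbar0 : 0 ≤ pbar := hpbar ▸ Real.iSup_nonneg fun i => (hP.eigenvalues_pos i).le
  have hr_le : ∀ i, r ≤ hsum.eigenvalues i :=
    hr ▸ fun i => ciInf_le (Set.finite_range _).bddBelow i
  have hεr : ε / 2 * pbar * frobNorm H ^ 2 < r := by
    have hden : 0 < pbar * frobNorm H ^ 2 := by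
      refine lt_of_le_of_ne (by positivity) fun h0 => ?_
      rw [← h0, div_zero] at hε1
      linarith
    linarith [(lt_div_iff₀ hden).mp hε1]
  have hinj := injective_mulVec_one_sub_smul_mul_inv_mul H hP.1 hsum hP_le hr_le
    (by positivity) hpbar0 hεr
  have hf : (fun x : Fin d → ℝ => x + ε • ((((-(1 / 2) : ℝ) •
      (P * Hᵀ * (lam • (H * P * Hᵀ) + R)⁻¹ * H)).mulVec x) + b)) =
      (· + ε • b) ∘ (1 - (ε / 2) • (P * Hᵀ * (lam • (H * P * Hᵀ) + R)⁻¹ * H)).mulVec := by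
    funext x
    simp only [Function.comp_apply, sub_mulVec, one_mulVec, smul_mulVec]
    module
  rw [hf]
  exact (Equiv.addRight (ε • b)).bijective.comp
    ⟨hinj, mulVec_surjective_iff_isUnit.mpr (mulVec_injective_iff_isUnit.mp hinj)⟩

/-- With `P`, `R` symmetric positive definite, `λ ≥ 0`,
`A = -(1/2)•P*Hᵀ*(λ•H*P*Hᵀ + R)⁻¹*H`, `p̄` the largest eigenvalue of `P`, `r(λ)` the
smallest eigenvalue of `λ•H*P*Hᵀ + R`, and `0 < ε < 2·r(λ)/(p̄·‖H‖_F²)`, the map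
`f(x) = x + ε • (A.mulVec x + b)` is a bijection of `ℝ^d` for any `b`. -/
theorem affine_flow_step_bijective {d S : ℕ} [NeZero d] [NeZero S]
    (P : Matrix (Fin d) (Fin d) ℝ) (R : Matrix (Fin S) (Fin S) ℝ)
    (H : Matrix (Fin S) (Fin d) ℝ) (lam pbar r ε : ℝ) (b : Fin d → ℝ)
    (hP : P.PosDef) (hR : R.PosDef) (hlam : 0 ≤ lam)
    (hpbar : pbar = ⨆ i : Fin d, hP.1.eigenvalues i)
    (hsum : (lam • (H * P * Hᵀ) + R).IsHermitian)
    (hr : r = ⨅ i : Fin S, hsum.eigenvalues i)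
    (hε0 : 0 < ε) (hε1 : ε < 2 * r / (pbar * frobNorm H ^ 2)) :
    Function.Bijective (fun x : Fin d → ℝ =>
      x + ε • ((((-(1 / 2) : ℝ) •
        (P * Hᵀ * (lam • (H * P * Hᵀ) + R)⁻¹ * H)).mulVec x) + b)) :=
  affine_flow_step_bijective_general P R H lam pbar r ε b hP hpbar hsum hr hε0 hε1
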